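/- arXiv:2406.09759 — 5 statements merged into one kernel-verified Lean document; each statement's English description precedes it below -/
import Mathlib

section
/- Let f ∈ ℝ^n be a vector whose support has cardinality m, and let F ∈ ℝ^{n×n} be the fault matrix defined by F_{ij} = f_i + f_j for i ≠ j and F_{ii} = 0. Then rank(F) ≤ min(1 + m, n). -/
open Matrix

/-- The fault matrix `F` (`F_{ij} = f_i + f_j` off the diagonal, zero on the
diagonal) of a fault vector `f` with `m` nonzero entries has rank at most
`min (1 + m) n`. -/
theorem fault_matrix_rank_le
    {n : ℕ} (f : Fin n → ℝ) (m : ℕ)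
    (hm : (Function.support f).ncard = m)
    (F : Matrix (Fin n) (Fin n) ℝ)
    (hF : ∀ i j, F i j = if i = j then 0 else f i + f j) :
    F.rank ≤ min (1 + m) n := by
  refine le_min ?_ F.rank_le_width
  classical
  set S : Finset (Fin n → ℝ) :=
    insert f ((Function.support f).toFinset.image (fun j => Fᵀ j)) with hS
  have hsub : Set.range Fᵀ ⊆ (S : Set (Fin n → ℝ)) := by
    rintro _ ⟨j, rfl⟩
    by_cases hj : f j = 0
    · have : Fᵀ j = f := by
        funext i
        simp only [transpose_apply, hF]
        split
        · rename_i h; rw [h, hj]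
        · rw [hj, add_zero]
      rw [this]
      simp [hS]
    · simp only [hS, Finset.coe_insert, Set.mem_insert_iff, Finset.coe_image]
      right
      exact ⟨j, by simpa using hj, rfl⟩
  have h1 : F.rank ≤ S.card := by
    rw [Matrix.rank_eq_finrank_span_cols]
    calc Module.finrank ℝ (Submodule.span ℝ (Set.range Fᵀ))
        ≤ Module.finrank ℝ (Submodule.span ℝ (S : Set (Fin n → ℝ))) :=
          Submodule.finrank_mono (Submodule.span_mono hsub)
      _ ≤ S.card := finrank_span_finset_le_card S
  refine h1.trans ?_
  calc S.card ≤ ((Function.support f).toFinset.image (fun j => Fᵀ j)).card + 1 :=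
        Finset.card_insert_le _ _
    _ ≤ (Function.support f).toFinset.card + 1 :=
        by gcongr; exact Finset.card_image_le
    _ = 1 + m := by
        rw [add_comm]
        congr 1
        rw [← hm, Set.ncard_eq_toFinset_card']
end

section
/- Let f ∈ ℝ^n be a vector whose support has cardinality m, let F ∈ ℝ^{n×n} be the fault matrix defined by F_{ij} = f_i + f_j for i ≠ j and F_{ii} = 0, and let A ∈ ℝ^{n×n} be an arbitrary matrix. Then the Hadamard (entrywise) product F ∘ A satisfies rank(F ∘ A) ≤ min(2m, n). -/
open Matrix

lemma matrix_rank_add_le {n : ℕ} (X Y : Matrix (Fin n) (Fin n) ℝ) :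
    (X + Y).rank ≤ X.rank + Y.rank := by
  rw [Matrix.rank, Matrix.rank, Matrix.rank, Matrix.mulVecLin_add]
  calc Module.finrank ℝ (LinearMap.range (X.mulVecLin + Y.mulVecLin))
      ≤ Module.finrank ℝ ((LinearMap.range X.mulVecLin ⊔ LinearMap.range Y.mulVecLin :
          Submodule ℝ (Fin n → ℝ))) := by
        apply Submodule.finrank_mono
        rintro _ ⟨v, rfl⟩
        exact Submodule.add_mem_sup ⟨v, rfl⟩ ⟨v, rfl⟩
    _ ≤ _ := Submodule.finrank_add_le_finrank_add_finrank _ _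

/-- The Hadamard product of the fault matrix of a fault vector with `m`
nonzero entries and an arbitrary matrix `A` has rank at most `min (2m) n`. -/
theorem fault_hadamard_rank_le
    {n : ℕ} (f : Fin n → ℝ) (m : ℕ)
    (hm : (Function.support f).ncard = m)
    (F : Matrix (Fin n) (Fin n) ℝ)
    (hF : ∀ i j, F i j = if i = j then 0 else f i + f j)
    (A : Matrix (Fin n) (Fin n) ℝ) :
    (Matrix.hadamard F A).rank ≤ min (2 * m) n := by
  set B : Matrix (Fin n) (Fin n) ℝ :=
    Matrix.of fun i j => if i = j then 0 else A i j with hB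
  have hFA : Matrix.hadamard F A = Matrix.diagonal f * B + B * Matrix.diagonal f := by
    ext i j
    simp only [Matrix.hadamard_apply, Matrix.add_apply, Matrix.diagonal_mul, Matrix.mul_diagonal,
      hF, hB, Matrix.of_apply]
    by_cases h : i = j <;> simp [h]; ring
  have hdiag : (Matrix.diagonal f).rank = m := by
    rw [Matrix.rank_diagonal, ← hm]
    have : Function.support f = {i | f i ≠ 0} := rfl
    rw [this, Set.ncard_eq_toFinset_card' _ , Set.toFinset_setOf]
    simp [Fintype.card_subtype]
  refine le_min ?_ ?_
  · rw [hFA]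
    calc (Matrix.diagonal f * B + B * Matrix.diagonal f).rank
        ≤ (Matrix.diagonal f * B).rank + (B * Matrix.diagonal f).rank :=
          matrix_rank_add_le _ _
      _ ≤ (Matrix.diagonal f).rank + (Matrix.diagonal f).rank :=
          add_le_add (Matrix.rank_mul_le_left _ _) (Matrix.rank_mul_le_right _ _)
      _ = 2 * m := by rw [hdiag]; ring
  · simpa using Matrix.rank_le_card_width (Matrix.hadamard F A)
end

section
/- (Proposition 3.1) Let x_1, …, x_n ∈ ℝ^d, let f ∈ ℝ^n be a fault vector whose support has cardinality m, and let D ∈ ℝ^{n×n} be the faulty Euclidean distance matrix with entries D_{ij} = (‖x_i − x_j‖ + f_i + f_j)² for i ≠ j and D_{ii} = 0. Then rank(D) ≤ min(d + 2 + 2m, n). -/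
open Matrix

/-! Expanding the square, `D = E + F` where `E_{ij} = ‖x_i - x_j‖²` is the fault-free EDM and `F`
vanishes on every entry whose row and column are both non-faulty. Since
`‖x_i - x_j‖² = ‖x_i‖² + ‖x_j‖² - 2⟪x_i, x_j⟫`, `E` is a Gram matrix of rank `≤ d` plus two
rank-one matrices, while `F` splits into its rows indexed by faults and the remaining rows,
which are supported on the fault columns; each part has rank `≤ m`. -/

theorem Matrix.rank_add_le {K m n : Type*} [Field K] [Fintype n] (A B : Matrix m n K) :
    (A + B).rank ≤ A.rank + B.rank := by
  rw [rank, rank, rank, mulVecLin_add]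
  refine (Submodule.finrank_mono ?_).trans (Submodule.finrank_add_le_finrank_add_finrank _ _)
  rintro _ ⟨v, rfl⟩
  exact Submodule.add_mem_sup ⟨v, rfl⟩ ⟨v, rfl⟩

theorem Matrix.rank_le_card_add_card_of_apply_eq_zero {K m n : Type*} [Field K] [Fintype m]
    [Fintype n] (A : Matrix m n K) (s : Finset m) (t : Finset n)
    (hA : ∀ i ∉ s, ∀ j ∉ t, A i j = 0) : A.rank ≤ s.card + t.card := by
  classical
  set B : Matrix m n K := of fun i j => if i ∈ s then A i j else 0
  set C : Matrix m n K := of fun i j => if i ∈ s then 0 else A i j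
  have hB : B.rank ≤ s.card := rank_le_card_of_support_subset B s fun i hi => by
    by_contra his
    exact hi (funext fun j => by simp [B, Finset.mem_coe.not.mp his])
  have hC : C.rank ≤ t.card := by
    rw [← rank_transpose]
    refine rank_le_card_of_support_subset Cᵀ t fun j hj => ?_
    by_contra hjt
    exact hj (funext fun i => by
      by_cases his : i ∈ s
      · simp [C, his]
      · simp [C, his, hA i his j (Finset.mem_coe.not.mp hjt)])
  calc A.rank = (B + C).rank := by
        congr; ext i j; by_cases his : i ∈ s <;> simp [B, C, his]
    _ ≤ s.card + t.card := (rank_add_le B C).trans (add_le_add hB hC)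

theorem Matrix.rank_gram_le_finrank {𝕜 E ι : Type*} [RCLike 𝕜] [NormedAddCommGroup E]
    [InnerProductSpace 𝕜 E] [FiniteDimensional 𝕜 E] [Fintype ι] (v : ι → E) :
    (gram 𝕜 v).rank ≤ Module.finrank 𝕜 E := by
  rw [gram_eq_conjTranspose_mul (stdOrthonormalBasis 𝕜 E)]
  exact (rank_mul_le_left _ _).trans ((rank_le_card_width _).trans (Fintype.card_fin _).le)

def euclideanDistanceMatrix {ι E : Type*} [NormedAddCommGroup E] (v : ι → E) : Matrix ι ι ℝ :=
  of fun i j => ‖v i - v j‖ ^ 2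

theorem rank_euclideanDistanceMatrix_le {ι E : Type*} [Fintype ι] [NormedAddCommGroup E]
    [InnerProductSpace ℝ E] [FiniteDimensional ℝ E] (v : ι → E) :
    (euclideanDistanceMatrix v).rank ≤ Module.finrank ℝ E + 2 := by
  set a : ι → ℝ := fun i => ‖v i‖ ^ 2
  have hsplit : euclideanDistanceMatrix v =
      (-2 : ℝ) • gram ℝ v + (vecMulVec a 1 + vecMulVec 1 a) := by
    ext i j
    simp only [euclideanDistanceMatrix, of_apply, norm_sub_sq_real, Matrix.add_apply,
      Matrix.smul_apply, gram_apply, vecMulVec_apply, Pi.one_apply, smul_eq_mul, a]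
    ring
  have hgram : ((-2 : ℝ) • gram ℝ v).rank ≤ Module.finrank ℝ E := by
    rw [rank_smul_of_mem_nonZeroDivisors _ (mem_nonZeroDivisors_of_ne_zero (by norm_num))]
    exact rank_gram_le_finrank v
  have hnorms : (vecMulVec a 1 + vecMulVec 1 a).rank ≤ 2 :=
    (rank_add_le _ _).trans (add_le_add (rank_vecMulVec_le _ _) (rank_vecMulVec_le _ _))
  rw [hsplit]
  exact (rank_add_le _ _).trans (add_le_add hgram hnorms)

/-- Proposition 3.1: the faulty EDM `D`, with
`D_{ij} = (‖x_i − x_j‖ + f_i + f_j)²` for `i ≠ j` and zero diagonal, built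
from `n` points in `ℝ^d` and a fault vector with `m` nonzero entries,
has rank at most `min (d + 2 + 2m) n`. -/
theorem faulty_edm_rank_le
    {n d : ℕ} (x : Fin n → EuclideanSpace ℝ (Fin d))
    (f : Fin n → ℝ) (m : ℕ)
    (hm : (Function.support f).ncard = m)
    (D : Matrix (Fin n) (Fin n) ℝ)
    (hD : ∀ i j, D i j = if i = j then 0 else (‖x i - x j‖ + f i + f j) ^ 2) :
    D.rank ≤ min (d + 2 + 2 * m) n := by
  classical
  set S : Finset (Fin n) := (Function.support f).toFinset
  have hS : S.card = m := by rw [← hm, Set.ncard_eq_toFinset_card']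
  have hfault : ∀ i ∉ S, ∀ j ∉ S, (D - euclideanDistanceMatrix x) i j = 0 := by
    intro i hi j hj
    simp only [S, Set.mem_toFinset, Function.mem_support, not_not] at hi hj
    by_cases hij : i = j <;> simp [hD, euclideanDistanceMatrix, hij, hi, hj]
  refine le_min ?_ (rank_le_width D)
  calc D.rank = (euclideanDistanceMatrix x + (D - euclideanDistanceMatrix x)).rank := by
        rw [add_sub_cancel]
    _ ≤ (d + 2) + (S.card + S.card) := by
        refine (rank_add_le _ _).trans (add_le_add ?_ ?_)
        · simpa using rank_euclideanDistanceMatrix_le x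
        · exact rank_le_card_add_card_of_apply_eq_zero _ S S hfault
    _ = d + 2 + 2 * m := by rw [hS]; ring
end

section
/- (Proposition 3.2) Let x_1, …, x_n ∈ ℝ^d, let f ∈ ℝ^n be a fault vector whose support has cardinality m, let D ∈ ℝ^{n×n} be the faulty Euclidean distance matrix with entries D_{ij} = (‖x_i − x_j‖ + f_i + f_j)² for i ≠ j and D_{ii} = 0, let J = I_n − (1/n) 𝟙 𝟙ᵀ, and let G = −(1/2) J D J be the geometric-centered EDM. Then rank(G) ≤ min(d + 2m, n − 1). -/
open Matrix

/-! Let `E` be the classical EDM `‖x i - x j‖²`. Since `E = u 𝟙ᵀ + 𝟙 uᵀ - 2 gram x` and `J` kills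
`𝟙` on both sides, `J E J = -2 J (gram x) J` has rank at most `d`. The fault part `D - E` vanishes
at `(i, j)` unless `i` or `j` is a fault satellite, so it is a sum of a matrix with at most `m`
nonzero rows and one with at most `m` nonzero columns. The bound `n - 1` holds because `G 𝟙 = 0`. -/

namespace Matrix

variable {ι m K : Type*} [Fintype ι] [Field K]

theorem rank_add_le_s12 (A B : Matrix m ι K) : (A + B).rank ≤ A.rank + B.rank :=
  (Submodule.finrank_mono (by rw [mulVecLin_add]; exact LinearMap.range_add_le _ _)).trans
    (Submodule.finrank_add_le_finrank_add_finrank _ _)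

theorem rank_smul_le [Fintype m] [DecidableEq m] (c : K) (A : Matrix m ι K) :
    (c • A).rank ≤ A.rank := by
  simpa using rank_mul_le_right (c • 1 : Matrix m m K) A

theorem rank_le_card_width_sub_one_of_mulVec_one_eq_zero {A : Matrix m ι K}
    (hA : A *ᵥ 1 = 0) : A.rank ≤ Fintype.card ι - 1 := by
  cases isEmpty_or_nonempty ι
  · simpa using A.rank_le_card_width
  have hker : 0 < Module.finrank K (LinearMap.ker A.mulVecLin) :=
    Module.finrank_pos_iff_exists_ne_zero.2 ⟨⟨1, hA⟩, fun h => one_ne_zero (congrArg Subtype.val h)⟩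
  have := A.mulVecLin.finrank_range_add_finrank_ker
  rw [Module.finrank_fintype_fun_eq_card] at this
  rw [rank]
  omega

theorem rank_le_two_mul_card_of_eq_zero [DecidableEq ι] {A : Matrix ι ι K} (s : Finset ι)
    (hA : ∀ i j, i ∉ s → j ∉ s → A i j = 0) : A.rank ≤ 2 * s.card := by
  set B : Matrix ι ι K := of fun i j => if i ∈ s then A i j else 0
  have hB : B.rank ≤ s.card := rank_le_card_of_support_subset _ _ fun i hi => by
    by_contra h
    exact hi (funext fun j => by simp [B, Finset.mem_coe.not.1 h])
  have hAB : (A - B).rank ≤ s.card := by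
    rw [← rank_transpose]
    refine rank_le_card_of_support_subset _ _ fun j hj => ?_
    by_contra h
    refine hj (funext fun i => ?_)
    by_cases hi : i ∈ s
    · simp [B, hi]
    · simp [B, hi, hA i j hi (Finset.mem_coe.not.1 h)]
  calc A.rank = (B + (A - B)).rank := by rw [add_sub_cancel]
    _ ≤ 2 * s.card := by grw [rank_add_le_s12, hB, hAB]; omega

theorem centering_mulVec_one [DecidableEq ι] [CharZero K] :
    (1 - (Fintype.card ι : K)⁻¹ • vecMulVec 1 1 : Matrix ι ι K) *ᵥ 1 = 0 := by
  cases isEmpty_or_nonempty ι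
  · exact Subsingleton.elim _ _
  rw [sub_mulVec, one_mulVec, smul_mulVec, vecMulVec_mulVec, one_dotProduct_one]
  ext i
  simp

theorem one_vecMul_centering [DecidableEq ι] [CharZero K] :
    (1 : ι → K) ᵥ* (1 - (Fintype.card ι : K)⁻¹ • vecMulVec 1 1 : Matrix ι ι K) = 0 := by
  cases isEmpty_or_nonempty ι
  · exact Subsingleton.elim _ _
  rw [vecMul_sub, vecMul_one, vecMul_smul, vecMul_vecMulVec, one_dotProduct_one]
  ext i
  simp

theorem mul_vecMulVec_add_vecMulVec_add_mul {J : Matrix ι ι K} (hJ : J *ᵥ 1 = 0)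
    (hJ' : 1 ᵥ* J = 0) (u v : ι → K) (A : Matrix ι ι K) :
    J * (vecMulVec u 1 + vecMulVec 1 v + A) * J = J * A * J := by
  simp only [mul_add, add_mul, mul_vecMulVec, vecMulVec_mul, hJ, hJ', vecMulVec_zero,
    zero_vecMulVec, zero_mul, zero_add]

theorem rank_gram_le {E : Type*} [NormedAddCommGroup E] [InnerProductSpace ℝ E]
    [FiniteDimensional ℝ E] (v : ι → E) : (gram ℝ v).rank ≤ Module.finrank ℝ E := by
  rw [gram_eq_conjTranspose_mul (stdOrthonormalBasis ℝ E)]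
  exact (rank_mul_le_right _ _).trans ((rank_le_card_height _).trans (Fintype.card_fin _).le)

end Matrix

theorem edm_eq_vecMulVec_add_vecMulVec_add_smul_gram {ι E : Type*} [NormedAddCommGroup E]
    [InnerProductSpace ℝ E] (x : ι → E) :
    (of fun i j => ‖x i - x j‖ ^ 2 : Matrix ι ι ℝ) =
      vecMulVec (fun i => ‖x i‖ ^ 2) 1 + vecMulVec 1 (fun i => ‖x i‖ ^ 2) + (-2 : ℝ) • gram ℝ x := by
  ext i j
  simp [norm_sub_sq_real, gram_apply]
  ring

/-- Proposition 3.2: the geometric-centered faulty EDM `G = −(1/2) J D J`,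
where `D` is the faulty EDM of `n` points in `ℝ^d` with `m` fault satellites,
has rank at most `min (d + 2m) (n − 1)`. -/
theorem gcedm_rank_le
    {n d : ℕ} (x : Fin n → EuclideanSpace ℝ (Fin d))
    (f : Fin n → ℝ) (m : ℕ)
    (hm : (Function.support f).ncard = m)
    (D : Matrix (Fin n) (Fin n) ℝ)
    (hD : ∀ i j, D i j = if i = j then 0 else (‖x i - x j‖ + f i + f j) ^ 2)
    (J : Matrix (Fin n) (Fin n) ℝ)
    (hJ : J = 1 - ((n : ℝ)⁻¹) • vecMulVec (1 : Fin n → ℝ) (1 : Fin n → ℝ))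
    (G : Matrix (Fin n) (Fin n) ℝ)
    (hG : G = (-(1/2) : ℝ) • (J * D * J)) :
    G.rank ≤ min (d + 2 * m) (n - 1) := by
  classical
  have hJ1 : J *ᵥ 1 = 0 := by simpa [hJ] using centering_mulVec_one (ι := Fin n) (K := ℝ)
  have h1J : 1 ᵥ* J = 0 := by simpa [hJ] using one_vecMul_centering (ι := Fin n) (K := ℝ)
  set E : Matrix (Fin n) (Fin n) ℝ := of fun i j => ‖x i - x j‖ ^ 2 with hE
  have hJEJ : J * E * J = (-2 : ℝ) • (J * gram ℝ x * J) := by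
    rw [hE, edm_eq_vecMulVec_add_vecMulVec_add_smul_gram, mul_vecMulVec_add_vecMulVec_add_mul hJ1 h1J,
      mul_smul_comm, smul_mul_assoc]
  have hfault : ∀ i j, i ∉ (Function.support f).toFinset → j ∉ (Function.support f).toFinset →
      (D - E) i j = 0 := by
    intro i j hi hj
    rw [Set.mem_toFinset, Function.notMem_support] at hi hj
    by_cases hij : i = j
    · simp [E, hD, hij]
    · simp [E, hD, hij, hi, hj]
  have hGE : G = (-(1/2) : ℝ) • (J * E * J + J * (D - E) * J) := by
    rw [hG, ← add_mul, ← mul_add, add_sub_cancel]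
  refine le_min ?_ ?_
  · calc G.rank ≤ (J * E * J).rank + (J * (D - E) * J).rank := by
          rw [hGE]
          exact (rank_smul_le _ _).trans (rank_add_le_s12 _ _)
      _ ≤ (gram ℝ x).rank + (D - E).rank := by
          grw [hJEJ, rank_smul_le, rank_mul_le_left, rank_mul_le_right, rank_mul_le_left,
            rank_mul_le_right]
      _ ≤ d + 2 * m := by
          grw [rank_gram_le, rank_le_two_mul_card_of_eq_zero _ hfault]
          simp [← hm, Set.ncard_eq_toFinset_card']
  · simpa using rank_le_card_width_sub_one_of_mulVec_one_eq_zero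
      (by rw [hG, smul_mulVec, ← mulVec_mulVec, hJ1, mulVec_zero, smul_zero] : G *ᵥ 1 = 0)
end

section
/- (Corollary 3.3) Let n ≥ 2 and fix arbitrary reals c_{ij} for 1 ≤ i < j ≤ n (the noise-free measured ranges, including any fault biases). For a noise vector w = (w_{ij})_{1 ≤ i < j ≤ n} ∈ ℝ^{n(n−1)/2}, define the noisy EDM D̃(w) ∈ ℝ^{n×n} by D̃(w)_{ij} = D̃(w)_{ji} = (c_{ij} + w_{ij})² for i < j and D̃(w)_{ii} = 0, and let G̃(w) = −(1/2) J D̃(w) J with J = I_n − (1/n) 𝟙 𝟙ᵀ. Then for Lebesgue-almost every w ∈ ℝ^{n(n−1)/2}, rank(G̃(w)) = n − 1. -/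
/-!
Write `n = m + 1`. Since `J 𝟙 = 0`, the rank of `G̃(w)` is at most `m` for every `w`. For the
lower bound, the leading `m × m` minor of `J D̃(w) J` is a polynomial in the noise `w`. It is not
the zero polynomial: at `w₀ = 1 - c` every measured range equals `1`, so `D̃(w₀) = 𝟙𝟙ᵀ - I` and
`J D̃(w₀) J = -J`, whose leading minor is `(-1)ᵐ / (m + 1)`. A nonzero real polynomial vanishes only
on a Lebesgue-null set (induction on the number of variables, using Fubini and the finiteness of
the roots of a one-variable polynomial), so the minor is nonzero for almost every `w`.
-/

open Matrix MeasureTheory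

/-- The noisy EDM built from noise-free measured ranges `c i j` (for `i < j`)
and a noise vector `w` indexed by the pairs `i < j`:
the `(i,j)` entry is the square of the measured range `c i j + w i j`, and
the diagonal entries are zero. -/
noncomputable def noisyEDM (n : ℕ) (c : Fin n → Fin n → ℝ)
    (w : {p : Fin n × Fin n // p.1 < p.2} → ℝ) :
    Matrix (Fin n) (Fin n) ℝ := fun i j =>
  if h : i < j then (c i j + w ⟨(i, j), h⟩) ^ 2
  else if h' : j < i then (c j i + w ⟨(j, i), h'⟩) ^ 2
  else 0

theorem Polynomial.ae_eval_ne_zero {μ : Measure ℝ} [NullSingletonClass μ] {p : Polynomial ℝ}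
    (hp : p ≠ 0) : ∀ᵐ x ∂μ, p.eval x ≠ 0 :=
  measure_eq_zero_iff_ae_notMem.mp ((Polynomial.finite_setOfPred_isRoot hp).measure_zero μ)

namespace MvPolynomial

variable {μ : Measure ℝ} [NullSingletonClass μ] [SigmaFinite μ]

theorem measurableSet_setOf_eval_ne_zero {ι : Type*} [Fintype ι] (p : MvPolynomial ι ℝ) :
    MeasurableSet {x : ι → ℝ | eval x p ≠ 0} :=
  (isOpen_ne_fun (continuous_eval p) continuous_const).measurableSet

theorem ae_eval_ne_zero_of_fin :
    ∀ {m : ℕ} {p : MvPolynomial (Fin m) ℝ}, p ≠ 0 →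
      ∀ᵐ x ∂(Measure.pi fun _ : Fin m => μ), eval x p ≠ 0
  | 0, p, hp => .of_forall fun x => by
      rw [eq_C_of_isEmpty p, eval_C]
      rintro h
      exact hp (by rw [eq_C_of_isEmpty p, h, C_0])
  | m + 1, p, hp => by
      set e := (MeasurableEquiv.piFinSuccAbove (fun _ => ℝ) 0).symm
      set q := finSuccEquiv ℝ m p
      obtain ⟨k, hk⟩ : ∃ k, q.coeff k ≠ 0 := by
        by_contra! h
        exact hp <| (finSuccEquiv ℝ m).injective <| by ext1 k; simp [q, h k]
      have eval_e : ∀ z, eval (e z) p = (q.map (eval z.2)).eval z.1 := fun z => by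
        simp [e, q, ← eval_eq_eval_mv_eval', Fin.consEquiv]
      have hmeas : MeasurableSet {z : ℝ × (Fin m → ℝ) | (q.map (eval z.2)).eval z.1 ≠ 0} := by
        simp_rw [← eval_e]
        exact (measurableSet_setOf_eval_ne_zero p).preimage e.measurable
      rw [← (measurePreserving_piFinSuccAbove (fun _ => μ) 0).symm.map_eq,
        e.measurableEmbedding.ae_map_iff]
      simp_rw [eval_e]
      rw [Measure.ae_prod_iff_ae_ae hmeas, Measure.ae_ae_comm hmeas]
      filter_upwards [ae_eval_ne_zero_of_fin hk] with s hs
      refine Polynomial.ae_eval_ne_zero fun h => hs ?_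
      rw [← Polynomial.coeff_map, h, Polynomial.coeff_zero]

theorem ae_eval_ne_zero {ι : Type*} [Fintype ι] {p : MvPolynomial ι ℝ} (hp : p ≠ 0) :
    ∀ᵐ x ∂(Measure.pi fun _ : ι => μ), eval x p ≠ 0 := by
  set e := Fintype.equivFin ι
  set f := MeasurableEquiv.arrowCongr' e.symm (MeasurableEquiv.refl ℝ)
  have hf : MeasurePreserving f (Measure.pi fun _ => μ) (Measure.pi fun _ => μ) :=
    measurePreserving_arrowCongr' _ _ e.symm _ fun _ => .id μ
  have hrename : rename e p ≠ 0 := (map_ne_zero_iff _ (rename_injective e e.injective)).mpr hp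
  rw [← hf.map_eq, f.measurableEmbedding.ae_map_iff]
  filter_upwards [ae_eval_ne_zero_of_fin hrename] with y hy
  rwa [eval_rename] at hy

end MvPolynomial

namespace Matrix

theorem ae_det_map_eval_ne_zero {ι k : Type*} [Fintype ι] [Fintype k] [DecidableEq k]
    {μ : Measure ℝ} [NullSingletonClass μ] [SigmaFinite μ] (M : Matrix k k (MvPolynomial ι ℝ))
    {x₀ : ι → ℝ} (h : (M.map (MvPolynomial.eval x₀)).det ≠ 0) :
    ∀ᵐ x ∂(Measure.pi fun _ : ι => μ), (M.map (MvPolynomial.eval x)).det ≠ 0 := by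
  have eval_det : ∀ x, (M.map (MvPolynomial.eval x)).det = MvPolynomial.eval x M.det :=
    fun x => (RingHom.map_det _ M).symm
  simp_rw [eval_det] at h ⊢
  exact MvPolynomial.ae_eval_ne_zero (ne_of_apply_ne _ (h.trans_eq (map_zero _).symm))

variable {K m n : Type*} [Field K] [Fintype n]

theorem rank_lt_card_width_of_mulVec_eq_zero (A : Matrix m n K) {v : n → K} (hv : v ≠ 0)
    (h : A *ᵥ v = 0) : A.rank < Fintype.card n := by
  have hker : 0 < Module.finrank K (LinearMap.ker A.mulVecLin) :=
    Module.finrank_pos_iff_exists_ne_zero.mpr ⟨⟨v, h⟩, fun h0 => hv (congrArg Subtype.val h0)⟩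
  have := A.mulVecLin.finrank_range_add_finrank_ker
  rw [Module.finrank_fintype_fun_eq_card] at this
  unfold rank
  omega

theorem card_le_rank_of_det_submatrix_ne_zero {k : Type*} [Fintype k] [DecidableEq k]
    (A : Matrix m n K) (r : k → m) (c : k → n) (h : (A.submatrix r c).det ≠ 0) :
    Fintype.card k ≤ A.rank :=
  (rank_of_det_ne_zero h).symm.le.trans (rank_submatrix_le A r c)

end Matrix

def centeringMatrix (K : Type*) [Field K] (n : ℕ) : Matrix (Fin n) (Fin n) K :=
  1 - (n : K)⁻¹ • vecMulVec 1 1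

section centeringMatrix

variable {K : Type*} [Field K] [CharZero K]

theorem centeringMatrix_mulVec_one {n : ℕ} [NeZero n] : centeringMatrix K n *ᵥ 1 = 0 := by
  rw [centeringMatrix, sub_mulVec, one_mulVec, smul_mulVec, vecMulVec_mulVec, one_dotProduct_one]
  ext i
  simp [NeZero.ne]

theorem centeringMatrix_mul_vecMulVec_one {n : ℕ} [NeZero n] :
    centeringMatrix K n * vecMulVec 1 1 = 0 := by
  rw [mul_vecMulVec, centeringMatrix_mulVec_one, zero_vecMulVec]

theorem centeringMatrix_mul_self {n : ℕ} [NeZero n] :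
    centeringMatrix K n * centeringMatrix K n = centeringMatrix K n := by
  conv_lhs => enter [2]; rw [centeringMatrix]
  rw [Matrix.mul_sub, Matrix.mul_one, Matrix.mul_smul, centeringMatrix_mul_vecMulVec_one,
    smul_zero, sub_zero]

theorem rank_mul_centeringMatrix_lt {m : Type*} {n : ℕ} [NeZero n] (B : Matrix m (Fin n) K) :
    (B * centeringMatrix K n).rank < n := by
  simpa using rank_lt_card_width_of_mulVec_eq_zero (B * centeringMatrix K n) (v := 1) one_ne_zero
    (by rw [← mulVec_mulVec, centeringMatrix_mulVec_one, mulVec_zero])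

theorem det_submatrix_castSucc_centeringMatrix (m : ℕ) :
    ((centeringMatrix K (m + 1)).submatrix Fin.castSucc Fin.castSucc).det = ((m : K) + 1)⁻¹ := by
  have hsub : (centeringMatrix K (m + 1)).submatrix Fin.castSucc Fin.castSucc =
      1 - ((m : K) + 1)⁻¹ • vecMulVec 1 1 := by
    ext i j
    simp [centeringMatrix, one_apply, Fin.castSucc_inj]
  rw [hsub, vecMulVec_eq Unit, ← Matrix.smul_mul, det_one_sub_mul_comm, det_unique]
  simp only [Matrix.mul_smul, Matrix.sub_apply, one_apply_eq, Matrix.smul_apply,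
    replicateRow_mul_replicateCol_apply, one_dotProduct_one, Fintype.card_fin, smul_eq_mul]
  field_simp
  ring

end centeringMatrix

section noisyEDM

open MvPolynomial

variable {n : ℕ} (c : Fin n → Fin n → ℝ)

noncomputable def noisyEDMPoly :
    Matrix (Fin n) (Fin n) (MvPolynomial {p : Fin n × Fin n // p.1 < p.2} ℝ) := fun i j =>
  if h : i < j then (C (c i j) + X ⟨(i, j), h⟩) ^ 2
  else if h' : j < i then (C (c j i) + X ⟨(j, i), h'⟩) ^ 2
  else 0

theorem map_eval_noisyEDMPoly (w : {p : Fin n × Fin n // p.1 < p.2} → ℝ) :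
    (noisyEDMPoly c).map (eval w) = noisyEDM n c w := by
  ext i j
  simp only [map_apply, noisyEDMPoly, noisyEDM]
  split_ifs <;> simp

theorem noisyEDM_unit_ranges :
    noisyEDM n c (fun p => 1 - c p.1.1 p.1.2) = vecMulVec 1 1 - 1 := by
  ext i j
  rcases lt_trichotomy i j with h | rfl | h
  · simp [noisyEDM, h, h.ne]
  · simp [noisyEDM]
  · simp [noisyEDM, h, h.not_gt, h.ne']

end noisyEDM

open MvPolynomial in
theorem ae_det_submatrix_castSucc_centered_noisyEDM_ne_zero {m : ℕ}
    (c : Fin (m + 1) → Fin (m + 1) → ℝ) :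
    ∀ᵐ w ∂(volume : Measure ({p : Fin (m + 1) × Fin (m + 1) // p.1 < p.2} → ℝ)),
      ((centeringMatrix ℝ (m + 1) * noisyEDM (m + 1) c w * centeringMatrix ℝ (m + 1)).submatrix
        Fin.castSucc Fin.castSucc).det ≠ 0 := by
  set J := centeringMatrix ℝ (m + 1)
  set P := (J.map C * noisyEDMPoly c * J.map C).submatrix Fin.castSucc Fin.castSucc
  have map_eval_J : ∀ w : {p : Fin (m + 1) × Fin (m + 1) // p.1 < p.2} → ℝ,
      (J.map C).map (eval w) = J :=
    fun w => by ext; simp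
  have map_eval_P : ∀ w, P.map (eval w) =
      (J * noisyEDM (m + 1) c w * J).submatrix Fin.castSucc Fin.castSucc := fun w => by
    rw [← submatrix_map, Matrix.map_mul, Matrix.map_mul, map_eval_noisyEDMPoly, map_eval_J]
  simp_rw [← map_eval_P]
  refine ae_det_map_eval_ne_zero P (x₀ := fun p => 1 - c p.1.1 p.1.2) ?_
  rw [map_eval_P, noisyEDM_unit_ranges, Matrix.mul_sub, centeringMatrix_mul_vecMulVec_one,
    Matrix.mul_one, zero_sub, Matrix.neg_mul, centeringMatrix_mul_self]
  change (-J.submatrix Fin.castSucc Fin.castSucc).det ≠ 0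
  rw [det_neg, det_submatrix_castSucc_centeringMatrix]
  exact mul_ne_zero (pow_ne_zero _ (by norm_num)) (by positivity)

theorem gcedm_noisy_rank_ae_general
    {n : ℕ} (c : Fin n → Fin n → ℝ)
    (J : Matrix (Fin n) (Fin n) ℝ)
    (hJ : J = 1 - ((n : ℝ)⁻¹) • vecMulVec (1 : Fin n → ℝ) (1 : Fin n → ℝ)) :
    ∀ᵐ w ∂(volume : Measure ({p : Fin n × Fin n // p.1 < p.2} → ℝ)),
      ((-(1/2) : ℝ) • (J * noisyEDM n c w * J)).rank = n - 1 := by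
  obtain _ | m := n
  · -- truncated subtraction: `0 - 1 = 0`
    exact .of_forall fun w => Nat.le_zero.mp (rank_le_width _)
  replace hJ : J = centeringMatrix ℝ (m + 1) := hJ
  subst hJ
  filter_upwards [ae_det_submatrix_castSucc_centered_noisyEDM_ne_zero c] with w hw
  rw [rank_smul_of_mem_nonZeroDivisors _ (mem_nonZeroDivisors_of_ne_zero (by norm_num))]
  have hlower := card_le_rank_of_det_submatrix_ne_zero _ _ _ hw
  have hupper := rank_mul_centeringMatrix_lt (centeringMatrix ℝ (m + 1) * noisyEDM (m + 1) c w)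
  rw [Fintype.card_fin] at hlower
  omega

/-- Corollary 3.3: for Lebesgue-almost every noise vector `w`, the
geometric-centered noisy EDM `G̃(w) = −(1/2) J D̃(w) J` has rank `n − 1`. -/
theorem gcedm_noisy_rank_ae
    {n : ℕ} (hn : 2 ≤ n) (c : Fin n → Fin n → ℝ)
    (J : Matrix (Fin n) (Fin n) ℝ)
    (hJ : J = 1 - ((n : ℝ)⁻¹) • vecMulVec (1 : Fin n → ℝ) (1 : Fin n → ℝ)) :
    ∀ᵐ w ∂(volume : Measure ({p : Fin n × Fin n // p.1 < p.2} → ℝ)),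
      ((-(1/2) : ℝ) • (J * noisyEDM n c w * J)).rank = n - 1 :=
  gcedm_noisy_rank_ae_general c J hJ
end
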